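/- Let R be a unital alternative ring with nontrivial idempotent e₁ and e₂ = 1 − e₁, k-torsion free for every k ∈ {2, 3, n−1, n−3} with k ≥ 1, satisfying conditions (1), (2), (3) and (4), and let D : R → R be a multiplicative Lie n-derivation (n ≥ 2) satisfying conditions (a), (b), (c) and with D(e₁) ∈ Z(R). Then for i ∈ {1,2}, for all a, b ∈ R_ii and any c, d ∈ R_ii with D(a) − c ∈ Z(R) and D(b) − d ∈ Z(R), one has D(a*b) − (c*b + a*d) ∈ Z(R). -/

import Mathlib

/-- The commutative center of a (possibly non-associative, non-unital) ring. -/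
def rctr (R : Type*) [NonUnitalNonAssocRing R] : Set R := {z | ∀ x, z * x = x * z}

/-- `R` is an alternative ring. -/
def IsAlt (R : Type*) [NonUnitalNonAssocRing R] : Prop :=
  ∀ x y : R, (x * x) * y = x * (x * y) ∧ (y * x) * x = y * (x * x)

/-- Peirce components relative to an idempotent `e`. -/
def P11 {R : Type*} [NonUnitalNonAssocRing R] (e : R) : Set R := {x | e * x = x ∧ x * e = x}
def P12 {R : Type*} [NonUnitalNonAssocRing R] (e : R) : Set R := {x | e * x = x ∧ x * e = 0}
def P21 {R : Type*} [NonUnitalNonAssocRing R] (e : R) : Set R := {x | e * x = 0 ∧ x * e = x}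
def P22 {R : Type*} [NonUnitalNonAssocRing R] (e : R) : Set R := {x | e * x = 0 ∧ x * e = 0}

/-- The iterated commutator `p_n`: `p_1(x) = x`,
`p_n(x_1,…,x_n) = [p_{n-1}(x_1,…,x_{n-1}), x_n]`. -/
def pn {R : Type*} [NonUnitalNonAssocRing R] : (n : ℕ) → (Fin n → R) → R
  | 0, _ => 0
  | 1, x => x 0
  | (m+2), x =>
      pn (m+1) (fun i => x i.castSucc) * x (Fin.last (m+1))
        - x (Fin.last (m+1)) * pn (m+1) (fun i => x i.castSucc)

/-- A (not necessarily additive) map `D` is a multiplicative Lie `n`-derivation. -/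
def IsMultLieNDeriv {R : Type*} [NonUnitalNonAssocRing R] (n : ℕ) (D : R → R) : Prop :=
  ∀ x : Fin n → R, D (pn n x) = ∑ i : Fin n, pn n (Function.update x i (D (x i)))

/-! Write `ad = lieRight e : u ↦ ⁅u, e⁆` for the idempotent `e = e₁`. In an alternative ring
`ad³ = ad`, and `ad` acts by `-1` on `R₁₂` and by `1` on `R₂₁`. Applying the Lie `n`-derivation
identity to tuples `(a, u, e, …, e)`, whose `p_n` is `adⁿ⁻²⁁a, u⁆`, and using that `D e` is central,
one finds that `D` preserves the commutant of `e` (which is `R₁₁ ⊕ R₂₂`) and that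
`D⁅a, u⁆ = ⁅D a, u⁆ + ⁅a, D u⁆` for `a ∈ R₁₁`, `u ∈ R₁₂` (and for `a ∈ R₂₂`, `u ∈ R₂₁`).

For `a, b ∈ R₁₁` and `v ∈ R₁₂`, expanding `D((ab)v) = D(a(bv))` in two ways gives
`⁅D(ab), v⁆ = (cb + ad)v`. Condition (a) says that the `R₂₂`-component of `D(ab)` is that of a
central `z`, so `X = D(ab) - (cb + ad) - z` lies in `R₁₁`; then `Xv = ⁅X, v⁆ = 0` for all
`v ∈ R₁₂`, and condition (2) forces `X = 0`. The `R₂₂` half is the same argument for the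
idempotent `1 - e`. -/

open Function

section

variable {R : Type*}

namespace IsAlt

variable [NonUnitalNonAssocRing R]

theorem left_linear (halt : IsAlt R) (x y z : R) :
    (x * y) * z + (y * x) * z = x * (y * z) + y * (x * z) := by
  have h : ((x + y) * (x + y)) * z - (x + y) * ((x + y) * z)
      = ((x * y) * z + (y * x) * z) - (x * (y * z) + y * (x * z)) := by
    simp only [add_mul, mul_add, (halt x z).1, (halt y z).1]
    abel
  rwa [(halt (x + y) z).1, sub_self, eq_comm, sub_eq_zero] at h

theorem right_linear (halt : IsAlt R) (x y z : R) :
    (z * x) * y + (z * y) * x = z * (x * y) + z * (y * x) := by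
  have h : (z * (x + y)) * (x + y) - z * ((x + y) * (x + y))
      = ((z * x) * y + (z * y) * x) - (z * (x * y) + z * (y * x)) := by
    simp only [add_mul, mul_add, (halt x z).2, (halt y z).2]
    abel
  rwa [(halt (x + y) z).2, sub_self, eq_comm, sub_eq_zero] at h

theorem flexible (halt : IsAlt R) (x y : R) : (x * y) * x = x * (y * x) := by
  have h := halt.left_linear x y x
  rwa [(halt x y).2, add_left_inj] at h

theorem mul_mul_eq_left (halt : IsAlt R) (e x y : R) :
    e * (x * y) = (e * x) * y + (x * e) * y - x * (e * y) :=
  eq_sub_of_add_eq (halt.left_linear e x y).symm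

theorem mul_mul_eq_right (halt : IsAlt R) (e x y : R) :
    (x * y) * e = x * (y * e) + x * (e * y) - (x * e) * y :=
  eq_sub_of_add_eq (halt.right_linear y e x)

theorem idem_mul_idem_mul (halt : IsAlt R) {e : R} (he : IsIdempotentElem e) (u : R) :
    e * (e * u) = e * u := by
  rw [← (halt e u).1, he.eq]

theorem mul_idem_mul_idem (halt : IsAlt R) {e : R} (he : IsIdempotentElem e) (u : R) :
    (u * e) * e = u * e := by
  rw [(halt e u).2, he.eq]

end IsAlt

section NonUnital

variable [NonUnitalNonAssocRing R] {e : R} {k : ℕ} {D : R → R}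

theorem P11_add {x y : R} (hx : x ∈ P11 e) (hy : y ∈ P11 e) : x + y ∈ P11 e :=
  ⟨by rw [mul_add, hx.1, hy.1], by rw [add_mul, hx.2, hy.2]⟩

theorem P11_sub {x y : R} (hx : x ∈ P11 e) (hy : y ∈ P11 e) : x - y ∈ P11 e :=
  ⟨by rw [mul_sub, hx.1, hy.1], by rw [sub_mul, hx.2, hy.2]⟩

theorem P12_sub {x y : R} (hx : x ∈ P12 e) (hy : y ∈ P12 e) : x - y ∈ P12 e :=
  ⟨by rw [mul_sub, hx.1, hy.1], by rw [sub_mul, hx.2, hy.2, sub_zero]⟩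

theorem commute_of_P11 {x : R} (hx : x ∈ P11 e) : Commute x e := hx.2.trans hx.1.symm

theorem commute_of_P22 {x : R} (hx : x ∈ P22 e) : Commute x e := hx.2.trans hx.1.symm

theorem P11_mul_P11_mem (halt : IsAlt R) {x y : R} (hx : x ∈ P11 e) (hy : y ∈ P11 e) :
    x * y ∈ P11 e :=
  ⟨by rw [halt.mul_mul_eq_left, hx.1, hx.2, hy.1]; abel,
   by rw [halt.mul_mul_eq_right, hx.2, hy.1, hy.2]; abel⟩

theorem P11_mul_P12_mem (halt : IsAlt R) {x y : R} (hx : x ∈ P11 e) (hy : y ∈ P12 e) :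
    x * y ∈ P12 e :=
  ⟨by rw [halt.mul_mul_eq_left, hx.1, hx.2, hy.1]; abel,
   by rw [halt.mul_mul_eq_right, hx.2, hy.1, hy.2, mul_zero]; abel⟩

theorem P12_mul_P22_mem (halt : IsAlt R) {x y : R} (hx : x ∈ P12 e) (hy : y ∈ P22 e) :
    x * y ∈ P12 e :=
  ⟨by rw [halt.mul_mul_eq_left, hx.1, hx.2, hy.1, zero_mul, mul_zero]; abel,
   by rw [halt.mul_mul_eq_right, hx.2, hy.1, hy.2, mul_zero, zero_mul]; abel⟩

theorem P12_mul_P11_eq_zero (halt : IsAlt R) (he : IsIdempotentElem e)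
    (h2 : ∀ u : R, u + u = 0 → u = 0) {x y : R} (hx : x ∈ P12 e) (hy : y ∈ P11 e) :
    x * y = 0 := by
  have hxy : (x * y) * e = x * y + x * y := by
    rw [halt.mul_mul_eq_right, hx.2, hy.1, hy.2, zero_mul, sub_zero]
  have h := halt.mul_idem_mul_idem he (x * y)
  rw [hxy, add_mul, hxy, add_eq_right] at h
  exact h2 _ h

theorem P22_mul_P12_eq_zero (halt : IsAlt R) (he : IsIdempotentElem e)
    (h2 : ∀ u : R, u + u = 0 → u = 0) {x y : R} (hx : x ∈ P22 e) (hy : y ∈ P12 e) :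
    x * y = 0 := by
  have hxy : e * (x * y) = -(x * y) := by
    rw [halt.mul_mul_eq_left, hx.1, hx.2, hy.1, zero_mul, zero_add, zero_sub]
  have h := halt.idem_mul_idem_mul he (x * y)
  rw [hxy, mul_neg, hxy, neg_neg, eq_neg_iff_add_eq_zero] at h
  exact h2 _ h

theorem mul_mem_P11_of_commute (halt : IsAlt R) (he : IsIdempotentElem e) {a : R}
    (ha : Commute a e) : a * e ∈ P11 e :=
  ⟨by rw [ha.eq, halt.idem_mul_idem_mul he], halt.mul_idem_mul_idem he a⟩

theorem sub_mul_mem_P22_of_commute (halt : IsAlt R) (he : IsIdempotentElem e) {a : R}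
    (ha : Commute a e) : a - a * e ∈ P22 e :=
  ⟨by rw [mul_sub, ha.eq, halt.idem_mul_idem_mul he, sub_self],
   by rw [sub_mul, halt.mul_idem_mul_idem he, sub_self]⟩

theorem lie_mem_P12_of_commute (halt : IsAlt R) (he : IsIdempotentElem e)
    (h2 : ∀ u : R, u + u = 0 → u = 0) {a v : R} (ha : Commute a e) (hv : v ∈ P12 e) :
    ⁅a, v⁆ ∈ P12 e := by
  have ha₁ := mul_mem_P11_of_commute halt he ha
  have ha₂ := sub_mul_mem_P22_of_commute halt he ha
  have h : ⁅a, v⁆ = (a * e) * v - v * (a - a * e) := by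
    conv_lhs => rw [← add_sub_cancel (a * e) a]
    rw [Ring.lie_def, add_mul, mul_add, P22_mul_P12_eq_zero halt he h2 ha₂ hv,
      P12_mul_P11_eq_zero halt he h2 hv ha₁]
    abel
  rw [h]
  exact P12_sub (P11_mul_P12_mem halt ha₁ hv) (P12_mul_P22_mem halt hv ha₂)

theorem mul_assoc_of_P11_P12 (halt : IsAlt R) (he : IsIdempotentElem e)
    (h2 : ∀ u : R, u + u = 0 → u = 0) {x y v : R} (hx : x ∈ P11 e) (hy : y ∈ P11 e)
    (hv : v ∈ P12 e) : (x * y) * v = x * (y * v) := by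
  have h := halt.right_linear y v x
  rwa [P12_mul_P11_eq_zero halt he h2 (P11_mul_P12_mem halt hx hv) hy,
    P12_mul_P11_eq_zero halt he h2 hv hy, mul_zero, add_zero, add_zero] at h

def lieRight (e : R) : R →+ R := AddMonoidHom.mulRight e - AddMonoidHom.mulLeft e

theorem lieRight_apply (e u : R) : lieRight e u = ⁅u, e⁆ := rfl

theorem lieRight_lieRight_lieRight (halt : IsAlt R) (he : IsIdempotentElem e) (y : R) :
    lieRight e (lieRight e (lieRight e y)) = lieRight e y := by
  have hm : e * (y * e) ∈ P11 e :=
    ⟨halt.idem_mul_idem_mul he _, by rw [halt.flexible, halt.mul_idem_mul_idem he]⟩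
  have hsq : lieRight e (lieRight e y) = y * e + e * y - (e * (y * e) + e * (y * e)) := by
    simp only [lieRight_apply, Ring.lie_def, sub_mul, mul_sub, halt.mul_idem_mul_idem he,
      halt.idem_mul_idem_mul he, halt.flexible]
    abel
  rw [hsq]
  simp only [lieRight_apply, Ring.lie_def, sub_mul, mul_sub, add_mul, mul_add, hm.1, hm.2,
    halt.mul_idem_mul_idem he, halt.idem_mul_idem_mul he, halt.flexible]
  abel

theorem lieRight_eq_zero_of_iterate (halt : IsAlt R) (he : IsIdempotentElem e) {y : R} (k : ℕ)
    (h : (lieRight e)^[k + 1] y = 0) : lieRight e y = 0 := by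
  have hcyc : ∀ m : ℕ, (lieRight e)^[m + 1] y = lieRight e y ∨
      (lieRight e)^[m + 1] y = lieRight e (lieRight e y) := by
    intro m
    induction m with
    | zero => exact Or.inl rfl
    | succ m ih =>
      rw [iterate_succ_apply']
      rcases ih with ih | ih
      · exact Or.inr (by rw [ih])
      · exact Or.inl (by rw [ih, lieRight_lieRight_lieRight halt he])
  rcases hcyc k with hk | hk
  · rwa [← hk]
  · rw [← lieRight_lieRight_lieRight halt he, ← hk, h, map_zero]

theorem lieRight_eq_neg_of_P12 {v : R} (hv : v ∈ P12 e) : lieRight e v = -v := by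
  rw [lieRight_apply, Ring.lie_def, hv.1, hv.2, zero_sub]

theorem lieRight_eq_self_of_P21 {w : R} (hw : w ∈ P21 e) : lieRight e w = w := by
  rw [lieRight_apply, Ring.lie_def, hw.1, hw.2, sub_zero]

theorem lieRight_iterate_P12 (e : R) (k : ℕ) :
    (∀ v ∈ P12 e, (lieRight e)^[k] v = v) ∨ (∀ v ∈ P12 e, (lieRight e)^[k] v = -v) := by
  induction k with
  | zero => exact Or.inl fun v _ => rfl
  | succ k ih =>
    simp only [iterate_succ_apply']
    rcases ih with ih | ih
    · exact Or.inr fun v hv => by rw [ih v hv, lieRight_eq_neg_of_P12 hv]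
    · exact Or.inl fun v hv => by rw [ih v hv, map_neg, lieRight_eq_neg_of_P12 hv, neg_neg]

theorem pn_eq_zero_of_mem_rctr (k : ℕ) (x : Fin (k + 2) → R) (j : Fin (k + 2))
    (hj : x j ∈ rctr R) : pn (k + 2) x = 0 := by
  induction k with
  | zero =>
    show x 0 * x 1 - x 1 * x 0 = 0
    fin_cases j
    · exact sub_eq_zero.2 (hj _)
    · exact sub_eq_zero.2 (hj _).symm
  | succ k ih =>
    show pn (k + 2) (fun i => x i.castSucc) * x (Fin.last _)
      - x (Fin.last _) * pn (k + 2) (fun i => x i.castSucc) = 0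
    cases j using Fin.lastCases with
    | last => exact sub_eq_zero.2 (hj _).symm
    | cast j => rw [ih _ j hj, zero_mul, mul_zero, sub_zero]

theorem pn_eq_lieRight_iterate (k : ℕ) (x : Fin (k + 2) → R)
    (hx : ∀ i : Fin (k + 2), 2 ≤ (i : ℕ) → x i = e) :
    pn (k + 2) x = (lieRight e)^[k] ⁅x 0, x 1⁆ := by
  induction k with
  | zero => rfl
  | succ k ih =>
    have hpre := ih (fun i => x i.castSucc) fun i hi => hx i.castSucc (by simpa using hi)
    simp only [Fin.castSucc_zero, Fin.castSucc_one] at hpre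
    rw [iterate_succ_apply', ← hpre, lieRight_apply, ← hx (Fin.last _) (by simp)]
    rfl

theorem IsMultLieNDeriv.map_lieRight_iterate_lie (hD : IsMultLieNDeriv (k + 2) D)
    (hDe : D e ∈ rctr R) (a u : R) :
    D ((lieRight e)^[k] ⁅a, u⁆) = (lieRight e)^[k] ⁅D a, u⁆ + (lieRight e)^[k] ⁅a, D u⁆ := by
  let x : Fin (k + 2) → R := Fin.cons a (Fin.cons u fun _ => e)
  have hxe : ∀ j : Fin (k + 2), 2 ≤ (j : ℕ) → x j = e := by
    intro j hj
    induction j using Fin.cases with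
    | zero => simp at hj
    | succ j =>
      induction j using Fin.cases with
      | zero => simp at hj
      | succ j => rfl
  have hupd : ∀ (i : Fin (k + 2)) (y : R), (i : ℕ) < 2 →
      ∀ j : Fin (k + 2), 2 ≤ (j : ℕ) → update x i y j = e := fun i y hi j hj => by
    rw [update_of_ne (by rintro rfl; omega), hxe j hj]
  have hrest : ∑ i : Fin k, pn (k + 2) (update x i.succ.succ (D (x i.succ.succ))) = 0 :=
    Finset.sum_eq_zero fun i _ => pn_eq_zero_of_mem_rctr k _ i.succ.succ (by simpa [x] using hDe)
  have h := hD x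
  rw [Fin.sum_univ_succ, Fin.sum_univ_succ, hrest, add_zero,
    pn_eq_lieRight_iterate k x hxe, pn_eq_lieRight_iterate k _ (hupd 0 _ (by simp)),
    pn_eq_lieRight_iterate k _ (hupd _ _ (by simp))] at h
  simpa [x] using h

theorem IsMultLieNDeriv.map_zero (hD : IsMultLieNDeriv (k + 2) D) : D 0 = 0 := by
  have h0 : (0 : R) ∈ rctr R := fun x => by rw [zero_mul, mul_zero]
  have h := hD fun _ => 0
  rwa [pn_eq_zero_of_mem_rctr k _ 0 h0, Finset.sum_eq_zero] at h
  intro i _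
  obtain ⟨j, hj⟩ := exists_ne i
  exact pn_eq_zero_of_mem_rctr k _ j (by rw [update_of_ne hj]; exact h0)

theorem IsMultLieNDeriv.commute_map_of_commute (halt : IsAlt R) (he : IsIdempotentElem e)
    (hD : IsMultLieNDeriv (k + 2) D) (hDe : D e ∈ rctr R) {a : R} (ha : Commute a e) :
    Commute (D a) e := by
  have h := hD.map_lieRight_iterate_lie hDe a e
  rw [ha.lie_eq, iterate_map_zero, hD.map_zero, ← lieRight_apply, ← iterate_succ_apply,
    Commute.lie_eq (hDe a).symm, iterate_map_zero, add_zero] at h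
  exact commute_iff_lie_eq.2 (lieRight_eq_zero_of_iterate halt he k h.symm)

theorem IsMultLieNDeriv.map_neg_of_P12 (hD : IsMultLieNDeriv (k + 2) D) (hDe : D e ∈ rctr R)
    {v : R} (hv : v ∈ P12 e) (hDv : D v ∈ P12 e) : D (-v) = -D v := by
  -- The tuples `(e, v, e, …)` and `(v, e, e, …)` give `D (adᵏ v) = adᵏ (D v)` and
  -- `D (-adᵏ v) = -adᵏ (D v)`; since `adᵏ = ±1` on `R₁₂`, one of them reads `D (-v) = -D v`.
  have hev := hD.map_lieRight_iterate_lie hDe e v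
  have hve := hD.map_lieRight_iterate_lie hDe v e
  rw [Ring.lie_def, hv.1, hv.2, sub_zero, Commute.lie_eq (hDe v), iterate_map_zero, zero_add,
    Ring.lie_def e, hDv.1, hDv.2, sub_zero] at hev
  rw [← lieRight_apply, lieRight_eq_neg_of_P12 hv, ← lieRight_apply, lieRight_eq_neg_of_P12 hDv,
    Commute.lie_eq (hDe v).symm, iterate_map_zero, add_zero, iterate_map_neg,
    iterate_map_neg] at hve
  rcases lieRight_iterate_P12 e k with hk | hk
  · rwa [hk v hv, hk _ hDv] at hve
  · rwa [hk v hv, hk _ hDv] at hev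

theorem IsMultLieNDeriv.map_lie_of_P12 (halt : IsAlt R) (he : IsIdempotentElem e)
    (h2 : ∀ u : R, u + u = 0 → u = 0) (hD : IsMultLieNDeriv (k + 2) D) (hDe : D e ∈ rctr R)
    (hD12 : ∀ v ∈ P12 e, D v ∈ P12 e) {a v : R} (ha : Commute a e) (hv : v ∈ P12 e) :
    D ⁅a, v⁆ = ⁅D a, v⁆ + ⁅a, D v⁆ := by
  have h := hD.map_lieRight_iterate_lie hDe a v
  have hav := lie_mem_P12_of_commute halt he h2 ha hv
  have hDav := lie_mem_P12_of_commute halt he h2 (hD.commute_map_of_commute halt he hDe ha) hv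
  have haDv := lie_mem_P12_of_commute halt he h2 ha (hD12 v hv)
  rcases lieRight_iterate_P12 e k with hk | hk
  · rwa [hk _ hav, hk _ hDav, hk _ haDv] at h
  · rwa [hk _ hav, hk _ hDav, hk _ haDv, hD.map_neg_of_P12 hDe hav (hD12 _ hav), ← neg_add,
      neg_inj] at h

end NonUnital

section Unital

variable [NonAssocRing R] {e : R} {k : ℕ} {D : R → R}

theorem P12_one_sub : P12 (1 - e) = P21 e := by
  ext x
  simp only [P12, P21, Set.mem_ofPred_eq, sub_mul, mul_sub, one_mul, mul_one, sub_eq_self,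
    sub_eq_zero, eq_comm (a := x)]

theorem P11_one_sub : P11 (1 - e) = P22 e := by
  ext x
  simp only [P11, P22, Set.mem_ofPred_eq, sub_mul, mul_sub, one_mul, mul_one, sub_eq_self]

theorem lie_mem_P21_of_commute (halt : IsAlt R) (he : IsIdempotentElem e)
    (h2 : ∀ u : R, u + u = 0 → u = 0) {a w : R} (ha : Commute a e) (hw : w ∈ P21 e) :
    ⁅a, w⁆ ∈ P21 e := by
  rw [← P12_one_sub] at hw ⊢
  exact lie_mem_P12_of_commute halt he.one_sub h2 ((Commute.one_right a).sub_right ha) hw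

theorem IsMultLieNDeriv.map_lie_of_P21 (halt : IsAlt R) (he : IsIdempotentElem e)
    (h2 : ∀ u : R, u + u = 0 → u = 0) (hD : IsMultLieNDeriv (k + 2) D) (hDe : D e ∈ rctr R)
    {a w : R} (ha : Commute a e) (hw : w ∈ P21 e) (hDw : D w ∈ P21 e) : D ⁅a, w⁆ = ⁅D a, w⁆ + ⁅a, D w⁆ := by
  have h := hD.map_lieRight_iterate_lie hDe a w
  have hiter : ∀ {y : R}, y ∈ P21 e → (lieRight e)^[k] y = y :=
    fun hy => iterate_fixed (lieRight_eq_self_of_P21 hy) k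
  rwa [hiter (lie_mem_P21_of_commute halt he h2 ha hw),
    hiter (lie_mem_P21_of_commute halt he h2 (hD.commute_map_of_commute halt he hDe ha) hw),
    hiter (lie_mem_P21_of_commute halt he h2 ha hDw)] at h

theorem one_sub_mul_mul_one_sub_of_commute (halt : IsAlt R) (he : IsIdempotentElem e) {y : R}
    (hy : Commute y e) : ((1 - e) * y) * (1 - e) = y - y * e := by
  rw [sub_mul, one_mul, ← hy.eq, mul_sub, mul_one, sub_mul, halt.mul_idem_mul_idem he, sub_self,
    sub_zero]

theorem map_mul_of_P11_P12 (halt : IsAlt R) (he : IsIdempotentElem e)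
    (h2 : ∀ u : R, u + u = 0 → u = 0) {a c v : R} (ha : a ∈ P11 e) (hc : c ∈ P11 e)
    (hac : D a - c ∈ rctr R) (hv : v ∈ P12 e) (hDv : D v ∈ P12 e)
    (hlie : D ⁅a, v⁆ = ⁅D a, v⁆ + ⁅a, D v⁆) : D (a * v) = c * v + a * D v := by
  have hDa : ⁅D a, v⁆ = c * v := by
    have h := Commute.lie_eq (hac v)
    rw [Ring.lie_def, sub_mul, mul_sub, P12_mul_P11_eq_zero halt he h2 hv hc, sub_zero] at h
    rw [Ring.lie_def, ← sub_eq_zero, ← h]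
    abel
  rwa [hDa, Ring.lie_def, P12_mul_P11_eq_zero halt he h2 hv ha, sub_zero, Ring.lie_def,
    P12_mul_P11_eq_zero halt he h2 hDv ha, sub_zero] at hlie

theorem lie_map_mul_of_P11 (halt : IsAlt R) (he : IsIdempotentElem e)
    (h2 : ∀ u : R, u + u = 0 → u = 0)
    (hlie : ∀ a ∈ P11 e, ∀ v ∈ P12 e, D ⁅a, v⁆ = ⁅D a, v⁆ + ⁅a, D v⁆)
    (hD12 : ∀ v ∈ P12 e, D v ∈ P12 e) {a b c d v : R} (ha : a ∈ P11 e) (hb : b ∈ P11 e)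
    (hc : c ∈ P11 e) (hd : d ∈ P11 e) (hac : D a - c ∈ rctr R) (hbd : D b - d ∈ rctr R)
    (hv : v ∈ P12 e) : ⁅D (a * b), v⁆ = (c * b + a * d) * v := by
  have hab := P11_mul_P11_mem halt ha hb
  have hbv := P11_mul_P12_mem halt hb hv
  have hDv := hD12 v hv
  have h := hlie _ hab v hv
  rw [Ring.lie_def (a * b) v, P12_mul_P11_eq_zero halt he h2 hv hab, sub_zero,
    Ring.lie_def (a * b), P12_mul_P11_eq_zero halt he h2 hDv hab, sub_zero,
    mul_assoc_of_P11_P12 halt he h2 ha hb hv,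
    map_mul_of_P11_P12 halt he h2 ha hc hac hbv (hD12 _ hbv) (hlie a ha _ hbv),
    map_mul_of_P11_P12 halt he h2 hb hd hbd hv hDv (hlie b hb v hv), mul_add,
    ← mul_assoc_of_P11_P12 halt he h2 hc hb hv, ← mul_assoc_of_P11_P12 halt he h2 ha hd hv,
    ← mul_assoc_of_P11_P12 halt he h2 ha hb hDv, ← add_assoc, add_left_inj] at h
  rw [add_mul, h]

theorem map_mul_sub_mem_rctr_of_P11 (halt : IsAlt R) (he : IsIdempotentElem e)
    (h2 : ∀ u : R, u + u = 0 → u = 0)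
    (hcomm : ∀ a ∈ P11 e, Commute (D a) e)
    (hlie : ∀ a ∈ P11 e, ∀ v ∈ P12 e, D ⁅a, v⁆ = ⁅D a, v⁆ + ⁅a, D v⁆)
    (hD12 : ∀ v ∈ P12 e, D v ∈ P12 e)
    (hann : ∀ x ∈ P11 e, (∀ y ∈ P12 e, x * y = 0) → x = 0)
    (hdiag : ∀ a ∈ P11 e, ∃ z ∈ rctr R, ((1 - e) * D a) * (1 - e) = z * (1 - e)) :
    ∀ a ∈ P11 e, ∀ b ∈ P11 e, ∀ c ∈ P11 e, ∀ d ∈ P11 e,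
      D a - c ∈ rctr R → D b - d ∈ rctr R → D (a * b) - (c * b + a * d) ∈ rctr R := by
  intro a ha b hb c hc d hd hac hbd
  have hab := P11_mul_P11_mem halt ha hb
  have hcbad : c * b + a * d ∈ P11 e :=
    P11_add (P11_mul_P11_mem halt hc hb) (P11_mul_P11_mem halt ha hd)
  obtain ⟨z, hz, hzab⟩ := hdiag _ hab
  have hP22 : D (a * b) - D (a * b) * e = z - z * e := by
    rwa [one_sub_mul_mul_one_sub_of_commute halt he (hcomm _ hab), mul_sub, mul_one] at hzab
  obtain ⟨X, hXdef⟩ : ∃ X, X = D (a * b) - (c * b + a * d) - z := ⟨_, rfl⟩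
  have hX : X ∈ P11 e := by
    have hXe : X = D (a * b) * e - (c * b + a * d) - z * e := by
      calc X = (D (a * b) - D (a * b) * e) - (z - z * e)
            + (D (a * b) * e - (c * b + a * d) - z * e) := by rw [hXdef]; abel
        _ = D (a * b) * e - (c * b + a * d) - z * e := by rw [hP22, sub_self, zero_add]
    rw [hXe]
    exact P11_sub (P11_sub (mul_mem_P11_of_commute halt he (hcomm _ hab)) hcbad)
      (mul_mem_P11_of_commute halt he (hz e))
  have hX0 : X = 0 := hann X hX fun v hv => calc
    X * v = ⁅X, v⁆ := by rw [Ring.lie_def, P12_mul_P11_eq_zero halt he h2 hv hX, sub_zero]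
    _ = ⁅D (a * b), v⁆ - ⁅c * b + a * d, v⁆ - ⁅z, v⁆ := by
      simp only [hXdef, Ring.lie_def, sub_mul, mul_sub]
      abel
    _ = 0 := by
      rw [lie_map_mul_of_P11 halt he h2 hlie hD12 ha hb hc hd hac hbd hv,
        Ring.lie_def (c * b + a * d), P12_mul_P11_eq_zero halt he h2 hv hcbad,
        sub_zero, sub_self, zero_sub, Commute.lie_eq (hz v), neg_zero]
  rw [hXdef, sub_eq_zero] at hX0
  rwa [hX0]

end Unital

end

theorem stmt16_general {R : Type*} [NonAssocRing R] (halt : IsAlt R)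
    (e₁ e₂ : R) (he₂ : e₂ = 1 - e₁)
    (he : e₁ * e₁ = e₁)
    (n : ℕ) (hn : 2 ≤ n)
    (htor : ∀ k ∈ ({2, 3, n - 1, n - 3} : Set ℕ), 1 ≤ k → ∀ x : R, k • x = 0 → x = 0)
    (hc2 : (∀ x ∈ P11 e₁, (∀ y ∈ P12 e₁, x * y = 0) → x = 0) ∧
           (∀ x ∈ P11 e₁, (∀ y ∈ P21 e₁, y * x = 0) → x = 0))
    (hc3 : (∀ x ∈ P22 e₁, (∀ y ∈ P12 e₁, y * x = 0) → x = 0) ∧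
           (∀ x ∈ P22 e₁, (∀ y ∈ P21 e₁, x * y = 0) → x = 0))
    (D : R → R) (hD : IsMultLieNDeriv n D)
    (ha : ∀ a ∈ P11 e₁, ∃ z ∈ rctr R, (e₂ * D a) * e₂ = z * e₂)
    (hb : ∀ a ∈ P22 e₁, ∃ z ∈ rctr R, (e₁ * D a) * e₁ = z * e₁)
    (hcc : (∀ a ∈ P12 e₁, D a ∈ P12 e₁) ∧ (∀ a ∈ P21 e₁, D a ∈ P21 e₁))
    (hDe₁ : D e₁ ∈ rctr R)
    :
    (∀ a ∈ P11 e₁, ∀ b ∈ P11 e₁, ∀ c ∈ P11 e₁, ∀ d ∈ P11 e₁,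
      D a - c ∈ rctr R → D b - d ∈ rctr R → D (a * b) - (c * b + a * d) ∈ rctr R) ∧
    (∀ a ∈ P22 e₁, ∀ b ∈ P22 e₁, ∀ c ∈ P22 e₁, ∀ d ∈ P22 e₁,
      D a - c ∈ rctr R → D b - d ∈ rctr R → D (a * b) - (c * b + a * d) ∈ rctr R) := by
  subst he₂
  obtain ⟨k, rfl⟩ : ∃ k, n = k + 2 := ⟨n - 2, by omega⟩
  have h2 : ∀ u : R, u + u = 0 → u = 0 := fun u hu =>
    htor 2 (Set.mem_insert 2 _) one_le_two u (by rwa [two_nsmul])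
  have hcomm {a : R} : Commute a e₁ → Commute (D a) e₁ := hD.commute_map_of_commute halt he hDe₁
  constructor
  · exact map_mul_sub_mem_rctr_of_P11 halt he h2 (fun a ha => hcomm (commute_of_P11 ha))
      (fun a ha v hv => hD.map_lie_of_P12 halt he h2 hDe₁ hcc.1 (commute_of_P11 ha) hv)
      hcc.1 hc2.1 ha
  · have h := map_mul_sub_mem_rctr_of_P11 (e := 1 - e₁) (D := D) halt
      (IsIdempotentElem.one_sub he) h2
    simp only [P11_one_sub, P12_one_sub, sub_sub_cancel] at h
    exact h (fun a ha => (Commute.one_right _).sub_right (hcomm (commute_of_P22 ha)))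
      (fun a ha w hw => hD.map_lie_of_P21 halt he h2 hDe₁ (commute_of_P22 ha) hw (hcc.2 w hw))
      hcc.2 hc3.2 hb

theorem stmt16 {R : Type*} [NonAssocRing R] (halt : IsAlt R)
    (e₁ e₂ : R) (he₂ : e₂ = 1 - e₁)
    (he : e₁ * e₁ = e₁) (hne0 : e₁ ≠ 0) (hne1 : e₁ ≠ 1)
    (n : ℕ) (hn : 2 ≤ n)
    (htor : ∀ k ∈ ({2, 3, n - 1, n - 3} : Set ℕ), 1 ≤ k → ∀ x : R, k • x = 0 → x = 0)
    (hc1 : (∀ x ∈ P12 e₁, (∀ y ∈ P21 e₁, x * y = 0) → x = 0) ∧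
           (∀ x ∈ P21 e₁, (∀ y ∈ P12 e₁, x * y = 0) → x = 0))
    (hc2 : (∀ x ∈ P11 e₁, (∀ y ∈ P12 e₁, x * y = 0) → x = 0) ∧
           (∀ x ∈ P11 e₁, (∀ y ∈ P21 e₁, y * x = 0) → x = 0))
    (hc3 : (∀ x ∈ P22 e₁, (∀ y ∈ P12 e₁, y * x = 0) → x = 0) ∧
           (∀ x ∈ P22 e₁, (∀ y ∈ P21 e₁, x * y = 0) → x = 0))
    (hc4 : ∀ z ∈ rctr R, z ≠ 0 → ∀ r : R, ∃ s : R, z * s = r)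
    (D : R → R) (hD : IsMultLieNDeriv n D)
    (ha : ∀ a ∈ P11 e₁, ∃ z ∈ rctr R, (e₂ * D a) * e₂ = z * e₂)
    (hb : ∀ a ∈ P22 e₁, ∃ z ∈ rctr R, (e₁ * D a) * e₁ = z * e₁)
    (hcc : (∀ a ∈ P12 e₁, D a ∈ P12 e₁) ∧ (∀ a ∈ P21 e₁, D a ∈ P21 e₁))
    (hDe₁ : D e₁ ∈ rctr R)
    :
    (∀ a ∈ P11 e₁, ∀ b ∈ P11 e₁, ∀ c ∈ P11 e₁, ∀ d ∈ P11 e₁,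
      D a - c ∈ rctr R → D b - d ∈ rctr R → D (a * b) - (c * b + a * d) ∈ rctr R) ∧
    (∀ a ∈ P22 e₁, ∀ b ∈ P22 e₁, ∀ c ∈ P22 e₁, ∀ d ∈ P22 e₁,
      D a - c ∈ rctr R → D b - d ∈ rctr R → D (a * b) - (c * b + a * d) ∈ rctr R) :=
  stmt16_general halt e₁ e₂ he₂ he n hn htor hc2 hc3 D hD ha hb hcc hDe₁
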